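/- arXiv:2509.14938 — 3 statements merged into one kernel-verified Lean document; each statement's English description precedes it below -/
import Mathlib

section
/- The function Ψ(x) = 1/(x·ln(1+1/x)) is convex on the interval (0, ∞). -/
/-!
Write Ψ = 1/g with g(x) = x·log(1 + 1/x). The function g is the perspective x ↦ x·h(1/x) of the
concave function h(t) = log(1 + t), hence concave, and it is positive on (0, ∞). The reciprocal of
a positive concave function is convex, because t ↦ 1/t is convex and decreasing on (0, ∞).
-/

open Real Set

section

variable {𝕜 : Type*} [Field 𝕜] [LinearOrder 𝕜] [IsStrictOrderedRing 𝕜]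

theorem ConcaveOn.convexOn_inv {E : Type*} [AddCommMonoid E] [Module 𝕜 E] {s : Set E}
    {f : E → 𝕜} (hf : ConcaveOn 𝕜 s f) (hf₀ : ∀ x ∈ s, 0 < f x) :
    ConvexOn 𝕜 s fun x ↦ (f x)⁻¹ := by
  refine ⟨hf.1, fun x hx y hy a b ha hb hab ↦ ?_⟩
  have hmix : 0 < a • f x + b • f y := convex_Ioi 0 (hf₀ x hx) (hf₀ y hy) ha hb hab
  calc (f (a • x + b • y))⁻¹ ≤ (a • f x + b • f y)⁻¹ := inv_anti₀ hmix (hf.2 hx hy ha hb hab)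
    _ ≤ a • (f x)⁻¹ + b • (f y)⁻¹ := by
      simpa only [zpow_neg_one] using
        (convexOn_zpow (-1)).2 (hf₀ x hx) (hf₀ y hy) ha hb hab

theorem ConcaveOn.mul_comp_inv {h : 𝕜 → 𝕜} (hh : ConcaveOn 𝕜 (Ioi 0) h) :
    ConcaveOn 𝕜 (Ioi 0) fun x ↦ x * h x⁻¹ := by
  refine ⟨convex_Ioi 0, fun x (hx : 0 < x) y (hy : 0 < y) a b ha hb hab ↦ ?_⟩
  set z := a * x + b * y
  have hz : 0 < z := by simpa using convex_Ioi 0 hx hy ha hb hab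
  -- concavity of `h` at `x⁻¹, y⁻¹` with the weights `a x / z, b y / z`, which average them to `z⁻¹`
  have key := hh.2 (inv_pos.2 hx) (inv_pos.2 hy) (by positivity : 0 ≤ a * x / z)
    (by positivity : 0 ≤ b * y / z) (by rw [← add_div, div_self hz.ne'])
  have harg : a * x / z * x⁻¹ + b * y / z * y⁻¹ = z⁻¹ := by field_simp; exact hab
  simp only [smul_eq_mul, harg] at key ⊢
  calc a * (x * h x⁻¹) + b * (y * h y⁻¹) = z * (a * x / z * h x⁻¹ + b * y / z * h y⁻¹) := by
        field_simp
    _ ≤ z * h z⁻¹ := by gcongr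

end

theorem concaveOn_log_one_add : ConcaveOn ℝ (Ioi 0) fun x ↦ log (1 + x) :=
  (strictConcaveOn_log_Ioi.concaveOn.translate_right 1).subset
    (fun x (hx : 0 < x) ↦ by simp only [mem_preimage, mem_Ioi]; linarith) (convex_Ioi 0)

theorem mul_log_one_add_inv_pos {x : ℝ} (hx : 0 < x) : 0 < x * log (1 + x⁻¹) :=
  mul_pos hx (log_pos (lt_add_of_pos_right 1 (inv_pos.2 hx)))

/-- Ψ(x) = 1/(x·ln(1+1/x)) is convex on (0, ∞). -/
theorem psi_convex :
    ConvexOn ℝ (Set.Ioi (0 : ℝ)) (fun x => 1 / (x * Real.log (1 + 1 / x))) := by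
  have hconcave : ConcaveOn ℝ (Ioi 0) fun x : ℝ ↦ x * log (1 + x⁻¹) :=
    concaveOn_log_one_add.mul_comp_inv
  simpa only [one_div] using hconcave.convexOn_inv fun x hx ↦ mul_log_one_add_inv_pos hx
end

section
/- Suppose the KKT conditions for problem P1 hold at (ν*, B*) with multipliers θ, γ, σ, μ ≥ 0 satisfying the stationarity condition θ = τ·α·ν³ + (σ − γ)·ν²/X (with τ, α, X > 0) and complementary slackness γ·(ν_min − ν) = 0, σ·(ν − ν_max) = 0, θ·(X/ν + Y/B − t₀) = 0. If the latency constraint X/ν + Y/B ≤ t₀ is slack (strict inequality) at the optimum and ν_min ≤ ν ≤ ν_max, then ν = ν_min. -/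
/-- Lemma 5: under the KKT conditions of P1, if the latency constraint is slack at the
optimum then ν = ν_min. -/
theorem slack_implies_nu_min
    (τ α X Y B t₀ νmin νmax ν θ γ σ μ : ℝ)
    (hτ : 0 < τ) (hα : 0 < α) (hX : 0 < X) (hY : 0 < Y) (hB : 0 < B) (ht₀ : 0 < t₀)
    (hνmin : 0 < νmin) (hbounds : νmin < νmax)
    (hθ : 0 ≤ θ) (hγ : 0 ≤ γ) (hσ : 0 ≤ σ) (hμ : 0 ≤ μ)
    (hstat : θ = τ * α * ν ^ 3 + (σ - γ) * ν ^ 2 / X)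
    (hcsγ : γ * (νmin - ν) = 0)
    (hcsσ : σ * (ν - νmax) = 0)
    (hcsθ : θ * (X / ν + Y / B - t₀) = 0)
    (hslack : X / ν + Y / B < t₀)
    (hrange : νmin ≤ ν ∧ ν ≤ νmax) :
    ν = νmin := by
  obtain ⟨h1, h2⟩ := hrange
  have hν : 0 < ν := lt_of_lt_of_le hνmin h1
  have hθ0 : θ = 0 := by
    rcases mul_eq_zero.mp hcsθ with h | h
    · exact h
    · exact absurd h (sub_ne_zero.mpr (ne_of_lt hslack))
  by_contra hne
  have hlt : νmin < ν := lt_of_le_of_ne h1 (Ne.symm hne)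
  have hγ0 : γ = 0 := by
    rcases mul_eq_zero.mp hcsγ with h | h
    · exact h
    · linarith [sub_eq_zero.mp h]
  have hpos : 0 < τ * α * ν ^ 3 + (σ - γ) * ν ^ 2 / X := by
    have h3 : 0 < τ * α * ν ^ 3 := by positivity
    have h4 : 0 ≤ (σ - γ) * ν ^ 2 / X := by
      rw [hγ0, sub_zero]; positivity
    linarith
  rw [hθ0] at hstat
  linarith
end

section
/- Communication energy E(B) = p·z / (B·log₂(1 + h·p/(B·N₀))) is strictly decreasing and convex in the bandwidth B on (0, ∞), for constants p, z, h, N₀ > 0. -/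
/-!
With c = hp/N₀ the energy is (p·z·ln 2)/R(B), where R(B) = B·log(1 + c/B) is the perspective
t ↦ t·φ(c/t) of the strictly concave φ(u) = log(1 + u). Perspectives of concave functions are
concave, and since φ(0) = 0, writing c/y = (x/y)·(c/x) + (1 - x/y)·0 for x < y shows that R is
strictly increasing. A positive constant over a positive concave (resp. strictly increasing)
function is convex (resp. strictly decreasing).
-/

open Real Set

section Perspective

variable {φ : ℝ → ℝ} {c : ℝ}

theorem ConcaveOn.concaveOn_mul_comp_div (hφ : ConcaveOn ℝ (Ici 0) φ) (hc : 0 ≤ c) :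
    ConcaveOn ℝ (Ioi 0) (fun t => t * φ (c / t)) := by
  refine ⟨convex_Ioi 0, fun x (hx : 0 < x) y (hy : 0 < y) a b ha hb hab => ?_⟩
  have hz : 0 < a * x + b * y := convex_Ioi (0 : ℝ) hx hy ha hb hab
  have hw : a * x / (a * x + b * y) + b * y / (a * x + b * y) = 1 := by
    field_simp
  have hmix : a * x / (a * x + b * y) * (c / x) + b * y / (a * x + b * y) * (c / y) =
      c / (a * x + b * y) := by
    field_simp
    linear_combination c * hab
  have key := hφ.2 (mem_Ici.2 (div_nonneg hc hx.le)) (mem_Ici.2 (div_nonneg hc hy.le))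
    (by positivity) (by positivity) hw
  simp only [smul_eq_mul, hmix] at key ⊢
  calc a * (x * φ (c / x)) + b * (y * φ (c / y))
      = (a * x + b * y) * (a * x / (a * x + b * y) * φ (c / x)
          + b * y / (a * x + b * y) * φ (c / y)) := by
        field_simp
    _ ≤ (a * x + b * y) * φ (c / (a * x + b * y)) := by gcongr

theorem StrictConcaveOn.strictMonoOn_mul_comp_div (hφ : StrictConcaveOn ℝ (Ici 0) φ)
    (hφ0 : 0 ≤ φ 0) (hc : 0 < c) : StrictMonoOn (fun t => t * φ (c / t)) (Ioi 0) := by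
  intro x (hx : 0 < x) y (hy : 0 < y) hxy
  have hθ : 0 < x / y := div_pos hx hy
  have hθ1 : 0 < 1 - x / y := sub_pos.2 ((div_lt_one hy).2 hxy)
  have hmix : x / y * (c / x) + (1 - x / y) * 0 = c / y := by
    field_simp
    ring
  have key := hφ.2 (mem_Ici.2 (div_nonneg hc.le hx.le)) (mem_Ici.2 le_rfl)
    (div_pos hc hx).ne' hθ hθ1 (add_sub_cancel _ _)
  simp only [smul_eq_mul, hmix] at key
  show x * φ (c / x) < y * φ (c / y)
  calc x * φ (c / x) = y * (x / y * φ (c / x)) := by field_simp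
    _ ≤ y * (x / y * φ (c / x) + (1 - x / y) * φ 0) := by
        gcongr
        exact le_add_of_nonneg_right (mul_nonneg hθ1.le hφ0)
    _ < y * φ (c / y) := by gcongr

end Perspective

theorem strictConcaveOn_log_one_add : StrictConcaveOn ℝ (Ioi (-1)) (fun u => log (1 + u)) := by
  refine (strictConcaveOn_log_Ioi.translate_right 1).subset
    (fun u (hu : -1 < u) => ?_) (convex_Ioi _)
  show 0 < 1 + u
  linarith

theorem ConcaveOn.convexOn_const_div {E : Type*} [AddCommGroup E] [Module ℝ E] {s : Set E}
    {f : E → ℝ} {K : ℝ} (hf : ConcaveOn ℝ s f) (hpos : ∀ x ∈ s, 0 < f x) (hK : 0 ≤ K) :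
    ConvexOn ℝ s (fun x => K / f x) := by
  refine ⟨hf.1, fun x hx y hy a b ha hb hab => ?_⟩
  have hcomb : 0 < a * f x + b * f y := convex_Ioi (0 : ℝ) (hpos x hx) (hpos y hy) ha hb hab
  have hinv := ((convexOn_zpow (-1 : ℤ)).smul hK).2 (hpos x hx) (hpos y hy) ha hb hab
  have hconc := hf.2 hx hy ha hb hab
  simp only [smul_eq_mul, zpow_neg_one, ← div_eq_mul_inv] at hinv hconc ⊢
  calc K / f (a • x + b • y) ≤ K / (a * f x + b * f y) :=
        div_le_div_of_nonneg_left hK hcomb hconc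
    _ ≤ a * (K / f x) + b * (K / f y) := hinv

theorem StrictMonoOn.strictAntiOn_const_div {α : Type*} [Preorder α] {s : Set α} {f : α → ℝ}
    {K : ℝ} (hf : StrictMonoOn f s) (hpos : ∀ x ∈ s, 0 < f x) (hK : 0 < K) :
    StrictAntiOn (fun x => K / f x) s :=
  fun _ hx _ hy hxy => div_lt_div_of_pos_left hK (hpos _ hx) (hf hx hy hxy)

/-- The communication energy E(B) = p·z/(B·log₂(1 + hp/(B·N₀))) is strictly decreasing
and convex in B on (0, ∞). -/
theorem comm_energy_anti_convex
    (p z h N₀ : ℝ) (hp : 0 < p) (hz : 0 < z) (hh : 0 < h) (hN₀ : 0 < N₀) :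
    StrictAntiOn (fun B : ℝ => p * z / (B * Real.logb 2 (1 + h * p / (B * N₀)))) (Set.Ioi 0) ∧
    ConvexOn ℝ (Set.Ioi 0) (fun B : ℝ => p * z / (B * Real.logb 2 (1 + h * p / (B * N₀)))) := by
  have hc : 0 < h * p / N₀ := by positivity
  have hK : 0 < p * z * log 2 := by positivity
  have hE : (fun B : ℝ => p * z / (B * logb 2 (1 + h * p / (B * N₀)))) =
      fun B => p * z * log 2 / (B * log (1 + h * p / N₀ / B)) := by
    funext B
    rw [logb, div_div, mul_comm N₀ B, mul_div_assoc', div_div_eq_mul_div]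
  have hφ : StrictConcaveOn ℝ (Ici 0) (fun u => log (1 + u)) :=
    strictConcaveOn_log_one_add.subset (Ici_subset_Ioi.2 (by norm_num)) (convex_Ici 0)
  have hrate : ∀ B ∈ Ioi (0 : ℝ), 0 < B * log (1 + h * p / N₀ / B) := fun B (hB : 0 < B) =>
    mul_pos hB (log_pos (lt_add_of_pos_right 1 (div_pos hc hB)))
  rw [hE]
  exact ⟨(hφ.strictMonoOn_mul_comp_div (by simp) hc).strictAntiOn_const_div hrate hK,
    (hφ.concaveOn.concaveOn_mul_comp_div hc.le).convexOn_const_div hrate hK.le⟩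
end
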